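/- Let p ≥ 1 and h ≥ 0 be natural numbers and let q be a real number with q > φ and S(q,0,p) ≥ 2. Then for every real x with 0 ≤ x ≤ S(q,h,p) there exists u : ℕ → {0,1} such that x = ∑_{k=0}^∞ u_k f_{pk+h} / q^{pk}. Consequently the set R^h_∞ := { ∑_{k=0}^∞ u_k f_{pk+h}/q^{pk} : u ∈ {0,1}^ℕ } equals the interval [0, S(q,h,p)]. -/

import Mathlib

/-- The Fibonacci-like sequence with `f 0 = f 1 = 1`. -/
def fib1 : ℕ → ℕ
  | 0 => 1
  | 1 => 1
  | n + 2 => fib1 (n + 1) + fib1 n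

/-- The golden ratio. -/
noncomputable def phi : ℝ := (1 + Real.sqrt 5) / 2

/-- `Sp q h p = ∑_{k=0}^∞ f_{pk+h} / q^{pk}`. -/
noncomputable def Sp (q : ℝ) (h p : ℕ) : ℝ := ∑' k : ℕ, (fib1 (p * k + h) : ℝ) / q ^ (p * k)

lemma fib1_pos : ∀ n, 0 < fib1 n
  | 0 => one_pos
  | 1 => one_pos
  | n + 2 => by
      have := fib1_pos (n + 1)
      simp [fib1]; omega

lemma fib1_le_succ : ∀ n, fib1 n ≤ fib1 (n + 1)
  | 0 => le_refl _
  | n + 1 => by simp [fib1]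

lemma fib1_superadd (a : ℕ) : ∀ b, fib1 a * fib1 b ≤ fib1 (a + b) ∧
    fib1 a * fib1 (b + 1) ≤ fib1 (a + b + 1)
  | 0 => by
      constructor
      · simp [fib1]
      · simpa [fib1] using fib1_le_succ a
  | b + 1 => by
      obtain ⟨h1, h2⟩ := fib1_superadd a b
      refine ⟨h2, ?_⟩
      have e1 : fib1 (b + 2) = fib1 (b + 1) + fib1 b := by simp [fib1]
      have e2 : fib1 (a + (b + 1) + 1) = fib1 (a + b + 1) + fib1 (a + b) := by
        have : a + (b + 1) + 1 = (a + b) + 2 := by omega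
        rw [this]; simp [fib1]
      calc fib1 a * fib1 (b + 1 + 1) = fib1 a * fib1 (b + 1) + fib1 a * fib1 b := by
            rw [e1]; ring
        _ ≤ fib1 (a + b + 1) + fib1 (a + b) := Nat.add_le_add h2 h1
        _ = fib1 (a + (b + 1) + 1) := e2.symm

lemma one_lt_phi : 1 < phi := by
  have h5 : Real.sqrt 5 ^ 2 = 5 := Real.sq_sqrt (by norm_num)
  have h0 : 0 ≤ Real.sqrt 5 := Real.sqrt_nonneg 5
  unfold phi
  nlinarith

lemma phi_sq : phi ^ 2 = phi + 1 := by
  have h5 : Real.sqrt 5 ^ 2 = 5 := Real.sq_sqrt (by norm_num)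
  unfold phi
  nlinarith

lemma fib1_le_phi_pow : ∀ n, (fib1 n : ℝ) ≤ phi ^ n
  | 0 => by simp [fib1]
  | 1 => by simp [fib1]; exact one_lt_phi.le
  | n + 2 => by
      have h1 := fib1_le_phi_pow (n + 1)
      have h2 := fib1_le_phi_pow n
      have hp : (0:ℝ) ≤ phi ^ n := pow_nonneg (by linarith [one_lt_phi]) n
      calc (fib1 (n + 2) : ℝ) = (fib1 (n + 1) : ℝ) + fib1 n := by
            rw [show fib1 (n + 2) = fib1 (n + 1) + fib1 n from rfl]; push_cast; ring
        _ ≤ phi ^ (n + 1) + phi ^ n := add_le_add h1 h2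
        _ = phi ^ n * (phi + 1) := by ring
        _ = phi ^ n * phi ^ 2 := by rw [phi_sq]
        _ = phi ^ (n + 2) := by ring

open scoped Classical in
/-- The greedy remainder sequence. -/
noncomputable def greedyR (a : ℕ → ℝ) (x : ℝ) : ℕ → ℝ
  | 0 => x
  | n + 1 => if a n ≤ greedyR a x n then greedyR a x n - a n else greedyR a x n

open scoped Classical in
/-- Greedy subsum lemma. -/
lemma greedy_subsum (a : ℕ → ℝ) (ha : ∀ n, 0 ≤ a n) (hsum : Summable a)
    (htail : ∀ n, a n ≤ ∑' k, a (n + 1 + k)) (x : ℝ) (hx0 : 0 ≤ x) (hx : x ≤ ∑' k, a k) :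
    ∃ u : ℕ → ℝ, (∀ n, u n = 0 ∨ u n = 1) ∧ HasSum (fun k => u k * a k) x := by
  set T : ℕ → ℝ := fun n => ∑' k, a (n + k) with hT
  have hsumT : ∀ n, Summable fun k => a (n + k) := fun n => by
    simpa [add_comm] using (summable_nat_add_iff n).2 hsum
  have hTrec : ∀ n, T n = a n + T (n + 1) := by
    intro n
    have h1 := Summable.tsum_eq_zero_add (hsumT n)
    have h2 : ∑' k : ℕ, a (n + (k + 1)) = ∑' k : ℕ, a (n + 1 + k) :=
      tsum_congr fun k => by rw [show n + (k + 1) = n + 1 + k by omega]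
    simpa [hT, h2] using h1
  set R : ℕ → ℝ := greedyR a x with hR
  have hRrec : ∀ n, R (n + 1) = if a n ≤ R n then R n - a n else R n := fun n => rfl
  set u : ℕ → ℝ := fun n => if a n ≤ R n then 1 else 0 with hu
  have hinv : ∀ n, 0 ≤ R n ∧ R n ≤ T n := by
    intro n
    induction n with
    | zero => exact ⟨hx0, by show x ≤ T 0; simpa [hT] using hx⟩
    | succ n ih =>
      rw [hRrec]
      split_ifs with hc
      · exact ⟨by linarith, by have := hTrec n; linarith [ih.2]⟩
      · refine ⟨ih.1, ?_⟩
        have : a n ≤ T (n + 1) := by simpa [hT] using htail n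
        linarith
  have hstep : ∀ n, u n * a n = R n - R (n + 1) := by
    intro n
    rw [hRrec]
    by_cases hc : a n ≤ R n <;> simp [hu, hc]
  have hpartial : ∀ n, ∑ i ∈ Finset.range n, u i * a i = x - R n := by
    intro n
    induction n with
    | zero => simp [hR, greedyR]
    | succ n ih => rw [Finset.sum_range_succ, ih, hstep]; ring
  have hTtendsto : Filter.Tendsto T Filter.atTop (nhds 0) := by
    have heq : T = fun i => ∑' k, a (k + i) := funext fun i => tsum_congr fun k => by
      rw [add_comm]
    rw [heq]
    exact tendsto_sum_nat_add a
  have hRtendsto : Filter.Tendsto R Filter.atTop (nhds 0) :=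
    squeeze_zero (fun n => (hinv n).1) (fun n => (hinv n).2) hTtendsto
  have hsum' : Summable fun k => u k * a k := by
    refine Summable.of_nonneg_of_le (fun n => ?_) (fun n => ?_) hsum
    · by_cases hc : a n ≤ R n <;> simp [hu, hc, ha n]
    · by_cases hc : a n ≤ R n <;> simp [hu, hc, ha n]
  have hps : Filter.Tendsto (fun n => ∑ i ∈ Finset.range n, u i * a i)
      Filter.atTop (nhds x) := by
    have : Filter.Tendsto (fun n => x - R n) Filter.atTop (nhds (x - 0)) :=
      tendsto_const_nhds.sub hRtendsto
    simpa [hpartial] using this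
  have hx' : (∑' k, u k * a k) = x :=
    tendsto_nhds_unique hsum'.hasSum.tendsto_sum_nat hps
  exact ⟨u, fun n => by by_cases hc : a n ≤ R n <;> simp [hu, hc], hx' ▸ hsum'.hasSum⟩

theorem stmt9 (p h : ℕ) (hp : 1 ≤ p) (q : ℝ) (hq : phi < q) (hS : 2 ≤ Sp q 0 p) :
    (∀ x : ℝ, 0 ≤ x → x ≤ Sp q h p →
      ∃ u : ℕ → ℝ, (∀ n, u n = 0 ∨ u n = 1) ∧
        HasSum (fun k => u k * (fib1 (p * k + h) : ℝ) / q ^ (p * k)) x) ∧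
    {y : ℝ | ∃ u : ℕ → ℝ, (∀ n, u n = 0 ∨ u n = 1) ∧
        HasSum (fun k => u k * (fib1 (p * k + h) : ℝ) / q ^ (p * k)) y} =
      Set.Icc 0 (Sp q h p) := by
  have h1phi : (1:ℝ) < phi := one_lt_phi
  have hq0 : 0 < q := lt_trans (by linarith) hq
  have hqp : ∀ k : ℕ, (0:ℝ) < q ^ k := fun k => pow_pos hq0 k
  -- summability of the general series
  have hsummable : ∀ m : ℕ, Summable fun k : ℕ => (fib1 (p * k + m) : ℝ) / q ^ (p * k) := by
    intro m
    have hr0 : (0:ℝ) ≤ (phi / q) ^ p := by positivity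
    have hr1 : (phi / q) ^ p < 1 := by
      apply pow_lt_one₀ (by positivity)
      · rw [div_lt_one hq0]; exact hq
      · omega
    have hgeo : Summable fun k : ℕ => phi ^ m * ((phi / q) ^ p) ^ k :=
      (summable_geometric_of_lt_one hr0 hr1).mul_left _
    refine Summable.of_nonneg_of_le (fun k => by positivity) (fun k => ?_) hgeo
    have hle : (fib1 (p * k + m) : ℝ) ≤ phi ^ (p * k + m) := fib1_le_phi_pow _
    have : ((phi / q) ^ p) ^ k = phi ^ (p * k) / q ^ (p * k) := by
      rw [← pow_mul, div_pow]
    rw [this, div_le_iff₀ (hqp _)]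
    have hne := (hqp (p * k)).ne'
    have e : phi ^ m * (phi ^ (p * k) / q ^ (p * k)) * q ^ (p * k) = phi ^ (p * k + m) := by
      rw [pow_add]; field_simp
    rw [e]; exact hle
  -- tail bound from hS
  have htail1 : (1:ℝ) ≤ ∑' k : ℕ, (fib1 (p * (k + 1)) : ℝ) / q ^ (p * (k + 1)) := by
    have h0 := hsummable 0
    have he := Summable.tsum_eq_zero_add h0
    have : Sp q 0 p = 1 + ∑' k : ℕ, (fib1 (p * (k + 1)) : ℝ) / q ^ (p * (k + 1)) := by
      rw [Sp, he]
      simp [fib1]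
    linarith [hS, this ▸ hS]
  -- the key tail inequality for the sequence a
  set a : ℕ → ℝ := fun k => (fib1 (p * k + h) : ℝ) / q ^ (p * k) with ha_def
  have ha : ∀ n, 0 ≤ a n := fun n => by positivity
  have htail : ∀ n, a n ≤ ∑' k, a (n + 1 + k) := by
    intro n
    set m := p * n + h with hm
    have hshift : ∀ m' : ℕ, Summable fun k : ℕ => (fib1 (p * (k + 1) + m') : ℝ) / q ^ (p * (k + 1)) := by
      intro m'
      have := (summable_nat_add_iff (f := fun k : ℕ => (fib1 (p * k + m') : ℝ) / q ^ (p * k)) 1).2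
        (hsummable m')
      simpa using this
    have key : (fib1 m : ℝ) ≤ ∑' k : ℕ, (fib1 (p * (k + 1) + m) : ℝ) / q ^ (p * (k + 1)) := by
      calc (fib1 m : ℝ) = fib1 m * 1 := by ring
        _ ≤ fib1 m * ∑' k : ℕ, (fib1 (p * (k + 1)) : ℝ) / q ^ (p * (k + 1)) := by
            have : (0:ℝ) ≤ (fib1 m : ℝ) := by positivity
            exact mul_le_mul_of_nonneg_left htail1 this
        _ = ∑' k : ℕ, (fib1 m : ℝ) * ((fib1 (p * (k + 1)) : ℝ) / q ^ (p * (k + 1))) := by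
            rw [tsum_mul_left]
        _ ≤ ∑' k : ℕ, (fib1 (p * (k + 1) + m) : ℝ) / q ^ (p * (k + 1)) := by
            refine Summable.tsum_le_tsum (fun k => ?_)
              (Summable.mul_left _ ((hshift 0).congr fun k => by norm_num)) (hshift m)
            rw [mul_div_assoc']
            refine div_le_div_of_nonneg_right ?_ (hqp _).le
            have h1 := (fib1_superadd (p * (k + 1)) m).1
            have h2 : fib1 m * fib1 (p * (k + 1)) ≤ fib1 (p * (k + 1) + m) := by
              rwa [mul_comm] at h1
            exact_mod_cast h2
    -- now divide by q^(p*n)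
    have heq : ∀ k : ℕ, a (n + 1 + k) =
        ((fib1 (p * (k + 1) + m) : ℝ) / q ^ (p * (k + 1))) / q ^ (p * n) := by
      intro k
      have e1 : p * (n + 1 + k) + h = p * (k + 1) + m := by rw [hm]; ring
      have e2 : q ^ (p * (n + 1 + k)) = q ^ (p * (k + 1)) * q ^ (p * n) := by
        rw [← pow_add]; ring_nf
      rw [ha_def]
      simp only [e1, e2]
      rw [div_div]
    have hsum_shift : (∑' k, a (n + 1 + k)) =
        (∑' k : ℕ, (fib1 (p * (k + 1) + m) : ℝ) / q ^ (p * (k + 1))) / q ^ (p * n) := by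
      rw [tsum_congr heq, tsum_div_const]
    rw [hsum_shift]
    exact div_le_div_of_nonneg_right key (hqp _).le
  have hSp_eq : Sp q h p = ∑' k, a k := rfl
  have hpart1 : ∀ x : ℝ, 0 ≤ x → x ≤ Sp q h p →
      ∃ u : ℕ → ℝ, (∀ n, u n = 0 ∨ u n = 1) ∧
        HasSum (fun k => u k * (fib1 (p * k + h) : ℝ) / q ^ (p * k)) x := by
    intro x hx0 hx
    obtain ⟨u, hu01, hsum_u⟩ := greedy_subsum a ha (hsummable h) htail x hx0 (hSp_eq ▸ hx)
    refine ⟨u, hu01, ?_⟩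
    have : (fun k => u k * (fib1 (p * k + h) : ℝ) / q ^ (p * k)) = fun k => u k * a k := by
      funext k; rw [ha_def, mul_div_assoc]
    rw [this]
    exact hsum_u
  refine ⟨hpart1, ?_⟩
  ext y
  constructor
  · rintro ⟨u, hu01, hy⟩
    constructor
    · refine hasSum_le (f := fun _ : ℕ => (0:ℝ)) (fun k => ?_) hasSum_zero hy
      rcases hu01 k with h' | h' <;> simp [h'] <;> positivity
    · rw [hSp_eq]
      refine hasSum_le (fun k => ?_) hy (hsummable h).hasSum
      rcases hu01 k with h' | h' <;> simp [h'] <;> positivity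
  · rintro ⟨hy0, hy1⟩
    exact hpart1 y hy0 hy1
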